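/- arXiv:1504.06210 — 5 statements merged into one kernel-verified Lean document; each statement's English description precedes it below -/
import Mathlib

section
/- Let V, φ : (0,∞) → (0,∞) be strictly increasing functions satisfying c₁(R/r)^{d₁} ≤ V(R)/V(r) ≤ c₂(R/r)^{d₂} and c₃(R/r)^{d₃} ≤ φ(R)/φ(r) ≤ c₄(R/r)^{d₄} for all 0 < r ≤ R, with d₃ > d₂. With f(t) := 1/V(φ⁻¹(t)), the Laplace transform w(λ) := ∫₀^∞ e^{-λt} f(t) dt satisfies w(λ) ≍ λ⁻¹ f(1/λ) uniformly in λ > 0; i.e. there are constants C₁, C₂ > 0 with C₁ λ⁻¹/V(φ⁻¹(λ⁻¹)) ≤ w(λ) ≤ C₂ λ⁻¹/V(φ⁻¹(λ⁻¹)) for all λ > 0. -/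
/-!
For `f = 1 / (V ∘ ψ)` the scaling bounds give `f t ≤ A (T / t) ^ α f T` for `0 < t ≤ T`, with
`α = d₂ / d₃ < 1`, and `f` is antitone. With `T = l⁻¹` this yields the pointwise majorant
`e^{-lt} f t ≤ f T (1 + A (l t) ^ (-α)) e^{-lt}`, a sum of Gamma integrands whose integral is
`l⁻¹ f T (1 + A Γ(1 - α))`. Conversely, on `(0, T]` the integrand is at least `e^{-1} f T`.
-/

open MeasureTheory Set Real

section Scaling

variable {V φ ψ : ℝ → ℝ}

lemma monotoneOn_of_strictMonoOn_of_rightInverse (hφ : StrictMonoOn φ (Ioi 0))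
    (hψ : ∀ t > 0, 0 < ψ t ∧ φ (ψ t) = t) : MonotoneOn ψ (Ioi 0) := by
  intro s hs t ht hst
  rw [← hφ.le_iff_le (hψ s hs).1 (hψ t ht).1, (hψ s hs).2, (hψ t ht).2]
  exact hst

lemma div_le_rpow_of_rightInverse_of_lower_scaling {c d : ℝ} (hc : 0 < c) (hd : 0 < d)
    (hφmono : StrictMonoOn φ (Ioi 0)) (hψ : ∀ t > 0, 0 < ψ t ∧ φ (ψ t) = t)
    (hφ : ∀ r R : ℝ, 0 < r → r ≤ R → c * (R / r) ^ d ≤ φ R / φ r)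
    {t T : ℝ} (ht : 0 < t) (htT : t ≤ T) : ψ T / ψ t ≤ (T / t / c) ^ d⁻¹ := by
  have hT : 0 < T := ht.trans_le htT
  obtain ⟨hψt, hφψt⟩ := hψ t ht
  obtain ⟨hψT, hφψT⟩ := hψ T hT
  have hle : ψ t ≤ ψ T := monotoneOn_of_strictMonoOn_of_rightInverse hφmono hψ ht hT htT
  rw [le_rpow_inv_iff_of_pos (by positivity) (by positivity) hd, le_div_iff₀ hc, mul_comm]
  simpa only [hφψt, hφψT] using hφ _ _ hψt hle

lemma antitoneOn_inv_comp (hVmono : StrictMonoOn V (Ioi 0)) (hVpos : ∀ r > 0, 0 < V r)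
    (hφmono : StrictMonoOn φ (Ioi 0)) (hψ : ∀ t > 0, 0 < ψ t ∧ φ (ψ t) = t) :
    AntitoneOn (fun t => (V (ψ t))⁻¹) (Ioi 0) := fun s hs t ht hst =>
  inv_anti₀ (hVpos _ (hψ s hs).1) <| hVmono.monotoneOn (hψ s hs).1 (hψ t ht).1 <|
    monotoneOn_of_strictMonoOn_of_rightInverse hφmono hψ hs ht hst

lemma inv_comp_le_rpow_mul_inv_comp {c₂ c₃ d₂ d₃ : ℝ} (hc₂ : 0 ≤ c₂) (hc₃ : 0 < c₃)
    (hd₂ : 0 ≤ d₂) (hd₃ : 0 < d₃) (hVpos : ∀ r > 0, 0 < V r)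
    (hφmono : StrictMonoOn φ (Ioi 0)) (hψ : ∀ t > 0, 0 < ψ t ∧ φ (ψ t) = t)
    (hV : ∀ r R : ℝ, 0 < r → r ≤ R → V R / V r ≤ c₂ * (R / r) ^ d₂)
    (hφ : ∀ r R : ℝ, 0 < r → r ≤ R → c₃ * (R / r) ^ d₃ ≤ φ R / φ r)
    {t T : ℝ} (ht : 0 < t) (htT : t ≤ T) :
    (V (ψ t))⁻¹ ≤ c₂ * c₃ ^ (-(d₂ / d₃)) * (T / t) ^ (d₂ / d₃) * (V (ψ T))⁻¹ := by
  have hT : 0 < T := ht.trans_le htT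
  have hψt := (hψ t ht).1
  have hψT := (hψ T hT).1
  have hVt := hVpos _ hψt
  have hVT := hVpos _ hψT
  calc (V (ψ t))⁻¹ = V (ψ T) / V (ψ t) * (V (ψ T))⁻¹ := by field_simp
    _ ≤ c₂ * (ψ T / ψ t) ^ d₂ * (V (ψ T))⁻¹ := by
        gcongr
        exact hV _ _ hψt (monotoneOn_of_strictMonoOn_of_rightInverse hφmono hψ ht hT htT)
    _ ≤ c₂ * ((T / t / c₃) ^ d₃⁻¹) ^ d₂ * (V (ψ T))⁻¹ := by
        gcongr
        exact div_le_rpow_of_rightInverse_of_lower_scaling hc₃ hd₃ hφmono hψ hφ ht htT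
    _ = c₂ * c₃ ^ (-(d₂ / d₃)) * (T / t) ^ (d₂ / d₃) * (V (ψ T))⁻¹ := by
        rw [← rpow_mul (by positivity), inv_mul_eq_div, div_rpow (by positivity) hc₃.le,
          rpow_neg hc₃.le]
        ring

end Scaling

lemma integrableOn_rpow_mul_exp_neg_mul_Ioi {a l : ℝ} (ha : 0 < a) (hl : 0 < l) :
    IntegrableOn (fun t : ℝ => t ^ (a - 1) * exp (-(l * t))) (Ioi 0) := by
  simpa only [rpow_one, neg_mul] using
    integrableOn_rpow_mul_exp_neg_mul_rpow (s := a - 1) (by linarith) one_pos hl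

section Laplace

variable {f : ℝ → ℝ} {A α l : ℝ}

lemma le_one_add_mul_rpow_mul_of_antitoneOn (hf : AntitoneOn f (Ioi 0))
    (hf₀ : ∀ t > 0, 0 ≤ f t) (hfA : ∀ t T, 0 < t → t ≤ T → f t ≤ A * (T / t) ^ α * f T)
    (hA : 0 ≤ A) {t T : ℝ} (ht : 0 < t) (hT : 0 < T) :
    f t ≤ (1 + A * (T / t) ^ α) * f T := by
  have hfT := hf₀ T hT
  have hAT : 0 ≤ A * (T / t) ^ α := by positivity
  rcases le_total t T with htT | hTt
  · nlinarith [hfA t T ht htT]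
  · nlinarith [hf hT ht hTt]

lemma integrableOn_exp_neg_mul_Ioi (hl : 0 < l) :
    IntegrableOn (fun t : ℝ => exp (-(l * t))) (Ioi 0) := by
  simpa only [neg_mul] using exp_neg_integrableOn_Ioi 0 hl

lemma integrableOn_majorant (hα : α < 1) (hl : 0 < l) :
    IntegrableOn (fun t : ℝ => exp (-(l * t)) + A * l ^ (-α) * (t ^ (1 - α - 1) * exp (-(l * t))))
      (Ioi 0) :=
  (integrableOn_exp_neg_mul_Ioi hl).add
    ((integrableOn_rpow_mul_exp_neg_mul_Ioi (by linarith) hl).const_mul _)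

lemma integral_majorant (hα : α < 1) (hl : 0 < l) :
    ∫ t in Ioi 0, (exp (-(l * t)) + A * l ^ (-α) * (t ^ (1 - α - 1) * exp (-(l * t)))) =
      l⁻¹ * (1 + A * Gamma (1 - α)) := by
  have hexp : ∫ t in Ioi (0 : ℝ), exp (-(l * t)) = l⁻¹ := by
    simpa [neg_mul, neg_div_neg_eq] using integral_exp_mul_Ioi (neg_neg_of_pos hl) 0
  have hpow : l ^ (-α) * (1 / l) ^ (1 - α) = l⁻¹ := by
    rw [one_div, inv_rpow hl.le, ← rpow_neg hl.le, ← rpow_add hl, ← rpow_neg_one]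
    ring_nf
  rw [integral_add (integrableOn_exp_neg_mul_Ioi hl)
      ((integrableOn_rpow_mul_exp_neg_mul_Ioi (by linarith) hl).const_mul _),
    integral_const_mul, hexp, integral_rpow_mul_exp_neg_mul_Ioi (by linarith) hl]
  linear_combination A * Gamma (1 - α) * hpow

lemma exp_mul_le_majorant (hf : AntitoneOn f (Ioi 0)) (hf₀ : ∀ t > 0, 0 ≤ f t)
    (hfA : ∀ t T, 0 < t → t ≤ T → f t ≤ A * (T / t) ^ α * f T) (hA : 0 ≤ A) (hl : 0 < l)
    {t : ℝ} (ht : 0 < t) :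
    exp (-(l * t)) * f t ≤
      f l⁻¹ * (exp (-(l * t)) + A * l ^ (-α) * (t ^ (1 - α - 1) * exp (-(l * t)))) := by
  have hscale : (l⁻¹ / t) ^ α = l ^ (-α) * t ^ (1 - α - 1) := by
    rw [div_rpow (by positivity) ht.le, inv_rpow hl.le, ← rpow_neg hl.le, sub_sub_cancel_left,
      rpow_neg ht.le, div_eq_mul_inv]
  have hft := le_one_add_mul_rpow_mul_of_antitoneOn hf hf₀ hfA hA ht (inv_pos.2 hl)
  rw [hscale] at hft
  calc exp (-(l * t)) * f t ≤ exp (-(l * t)) * ((1 + A * (l ^ (-α) * t ^ (1 - α - 1))) * f l⁻¹) :=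
        by gcongr
    _ = _ := by ring

lemma integrableOn_exp_mul (hf : AntitoneOn f (Ioi 0)) (hf₀ : ∀ t > 0, 0 ≤ f t)
    (hfA : ∀ t T, 0 < t → t ≤ T → f t ≤ A * (T / t) ^ α * f T) (hA : 0 ≤ A) (hα : α < 1)
    (hl : 0 < l) : IntegrableOn (fun t => exp (-(l * t)) * f t) (Ioi 0) := by
  refine ((integrableOn_majorant (A := A) hα hl).const_mul (f l⁻¹)).mono' ?_ ?_
  · exact (continuous_exp.comp (continuous_const.mul continuous_id).neg).aestronglyMeasurable.mul
      (aemeasurable_restrict_of_antitoneOn measurableSet_Ioi hf).aestronglyMeasurable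
  · refine ae_restrict_of_forall_mem measurableSet_Ioi fun t ht => ?_
    rw [Real.norm_of_nonneg (mul_nonneg (exp_pos _).le (hf₀ t ht))]
    exact exp_mul_le_majorant hf hf₀ hfA hA hl ht

lemma integral_exp_mul_le (hf : AntitoneOn f (Ioi 0)) (hf₀ : ∀ t > 0, 0 ≤ f t)
    (hfA : ∀ t T, 0 < t → t ≤ T → f t ≤ A * (T / t) ^ α * f T) (hA : 0 ≤ A) (hα : α < 1)
    (hl : 0 < l) :
    ∫ t in Ioi 0, exp (-(l * t)) * f t ≤ (1 + A * Gamma (1 - α)) * (l⁻¹ * f l⁻¹) := by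
  calc ∫ t in Ioi 0, exp (-(l * t)) * f t
      ≤ ∫ t in Ioi 0, f l⁻¹ *
          (exp (-(l * t)) + A * l ^ (-α) * (t ^ (1 - α - 1) * exp (-(l * t)))) :=
        setIntegral_mono_on (integrableOn_exp_mul hf hf₀ hfA hA hα hl)
          ((integrableOn_majorant hα hl).const_mul _) measurableSet_Ioi
          fun t ht => exp_mul_le_majorant hf hf₀ hfA hA hl ht
    _ = (1 + A * Gamma (1 - α)) * (l⁻¹ * f l⁻¹) := by
        rw [integral_const_mul, integral_majorant hα hl]
        ring

lemma le_integral_exp_mul (hf : AntitoneOn f (Ioi 0)) (hf₀ : ∀ t > 0, 0 ≤ f t)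
    (hfA : ∀ t T, 0 < t → t ≤ T → f t ≤ A * (T / t) ^ α * f T) (hA : 0 ≤ A) (hα : α < 1)
    (hl : 0 < l) :
    exp (-1) * (l⁻¹ * f l⁻¹) ≤ ∫ t in Ioi 0, exp (-(l * t)) * f t := by
  have hint := integrableOn_exp_mul hf hf₀ hfA hA hα hl
  have hT : 0 < l⁻¹ := inv_pos.2 hl
  calc exp (-1) * (l⁻¹ * f l⁻¹) = exp (-1) * f l⁻¹ * volume.real (Ioc 0 l⁻¹) := by
        rw [volume_real_Ioc_of_le hT.le, sub_zero]
        ring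
    _ ≤ ∫ t in Ioc 0 l⁻¹, exp (-(l * t)) * f t := by
        refine setIntegral_ge_of_const_le_real measurableSet_Ioc measure_Ioc_lt_top.ne
          (fun t ht => ?_) (hint.mono_set Ioc_subset_Ioi_self)
        have hlt : l * t ≤ 1 := by
          simpa [mul_inv_cancel₀ hl.ne'] using mul_le_mul_of_nonneg_left ht.2 hl.le
        exact mul_le_mul (exp_le_exp.2 (by linarith)) (hf ht.1 hT ht.2) (hf₀ _ hT)
          (exp_pos _).le
    _ ≤ ∫ t in Ioi 0, exp (-(l * t)) * f t :=
        setIntegral_mono_set hint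
          (ae_restrict_of_forall_mem measurableSet_Ioi fun t ht =>
            mul_nonneg (exp_pos _).le (hf₀ t ht))
          Ioc_subset_Ioi_self.eventuallyLE

end Laplace

theorem laplace_transform_comparable_general (V φ ψ : ℝ → ℝ)
    (c₁ c₂ c₃ c₄ d₁ d₂ d₃ d₄ : ℝ)
    (hc₂ : 0 < c₂) (hc₃ : 0 < c₃)
    (hd₁ : 0 < d₁) (hd₁₂ : d₁ ≤ d₂) (hd₃ : 0 < d₃)
    (hd : d₂ < d₃)
    (hVmono : StrictMonoOn V (Set.Ioi 0)) (hVpos : ∀ r > 0, 0 < V r)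
    (hφmono : StrictMonoOn φ (Set.Ioi 0))
    (hψ : ∀ t > 0, 0 < ψ t ∧ φ (ψ t) = t)
    (hV : ∀ r R : ℝ, 0 < r → r ≤ R →
      c₁ * (R / r) ^ d₁ ≤ V R / V r ∧ V R / V r ≤ c₂ * (R / r) ^ d₂)
    (hφ : ∀ r R : ℝ, 0 < r → r ≤ R →
      c₃ * (R / r) ^ d₃ ≤ φ R / φ r ∧ φ R / φ r ≤ c₄ * (R / r) ^ d₄) :
    ∃ C₁ > 0, ∃ C₂ > 0, ∀ l > 0,
      C₁ * (l⁻¹ / V (ψ l⁻¹)) ≤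
          (∫ t in Set.Ioi (0 : ℝ), Real.exp (-(l * t)) / V (ψ t)) ∧
        (∫ t in Set.Ioi (0 : ℝ), Real.exp (-(l * t)) / V (ψ t)) ≤
          C₂ * (l⁻¹ / V (ψ l⁻¹)) := by
  have hf := antitoneOn_inv_comp hVmono hVpos hφmono hψ
  have hf₀ : ∀ t > 0, 0 ≤ (V (ψ t))⁻¹ := fun t ht => (inv_pos.2 (hVpos _ (hψ t ht).1)).le
  have hfA (t T : ℝ) (ht : 0 < t) (htT : t ≤ T) :=
    inv_comp_le_rpow_mul_inv_comp hc₂.le hc₃ (hd₁.le.trans hd₁₂) hd₃ hVpos hφmono hψ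
      (fun r R hr hrR => (hV r R hr hrR).2) (fun r R hr hrR => (hφ r R hr hrR).1) ht htT
  have hA : 0 ≤ c₂ * c₃ ^ (-(d₂ / d₃)) := by positivity
  have hα : d₂ / d₃ < 1 := (div_lt_one hd₃).2 hd
  have hΓ : 0 < Gamma (1 - d₂ / d₃) := Gamma_pos_of_pos (by linarith)
  simp only [div_eq_mul_inv]
  refine ⟨exp (-1), exp_pos _, 1 + c₂ * c₃ ^ (-(d₂ / d₃)) * Gamma (1 - d₂ / d₃), by positivity,
    fun l hl => ?_⟩
  exact ⟨le_integral_exp_mul hf hf₀ hfA hA hα hl, integral_exp_mul_le hf hf₀ hfA hA hα hl⟩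

/-- Laplace transform asymptotics: if `V, φ` are strictly increasing positive functions
on `(0,∞)` with two-sided polynomial ratio bounds (exponents `d₁ ≤ d₂` for `V`,
`d₃ ≤ d₄` for `φ`) and `d₂ < d₃`, and `ψ = φ⁻¹`, then the Laplace transform of
`f(t) = 1/V(φ⁻¹(t))` is comparable to `λ⁻¹ f(1/λ)` uniformly in `λ > 0`. -/
theorem laplace_transform_comparable (V φ ψ : ℝ → ℝ)
    (c₁ c₂ c₃ c₄ d₁ d₂ d₃ d₄ : ℝ)
    (hc₁ : 0 < c₁) (hc₂ : 0 < c₂) (hc₃ : 0 < c₃) (hc₄ : 0 < c₄)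
    (hd₁ : 0 < d₁) (hd₁₂ : d₁ ≤ d₂) (hd₃ : 0 < d₃) (hd₃₄ : d₃ ≤ d₄)
    (hd : d₂ < d₃)
    (hVmono : StrictMonoOn V (Set.Ioi 0)) (hVpos : ∀ r > 0, 0 < V r)
    (hφmono : StrictMonoOn φ (Set.Ioi 0)) (hφpos : ∀ r > 0, 0 < φ r)
    (hψ : ∀ t > 0, 0 < ψ t ∧ φ (ψ t) = t)
    (hV : ∀ r R : ℝ, 0 < r → r ≤ R →
      c₁ * (R / r) ^ d₁ ≤ V R / V r ∧ V R / V r ≤ c₂ * (R / r) ^ d₂)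
    (hφ : ∀ r R : ℝ, 0 < r → r ≤ R →
      c₃ * (R / r) ^ d₃ ≤ φ R / φ r ∧ φ R / φ r ≤ c₄ * (R / r) ^ d₄) :
    ∃ C₁ > 0, ∃ C₂ > 0, ∀ l > 0,
      C₁ * (l⁻¹ / V (ψ l⁻¹)) ≤
          (∫ t in Set.Ioi (0 : ℝ), Real.exp (-(l * t)) / V (ψ t)) ∧
        (∫ t in Set.Ioi (0 : ℝ), Real.exp (-(l * t)) / V (ψ t)) ≤
          C₂ * (l⁻¹ / V (ψ l⁻¹)) :=
  laplace_transform_comparable_general V φ ψ c₁ c₂ c₃ c₄ d₁ d₂ d₃ d₄ hc₂ hc₃ hd₁ hd₁₂ hd₃ hd hVmono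
    hVpos hφmono hψ hV hφ
end

section
/- Let V, φ be strictly increasing positive functions on (0,∞) satisfying two-sided polynomial ratio bounds with exponents d₁ ≤ d₂ for V and d₃ ≤ d₄ for φ, and d₂ < d₃. Then ∫₀^t 1/V(φ⁻¹(s)) ds ≍ t/V(φ⁻¹(t)) uniformly for t > 0: there exist constants so that t/V(φ⁻¹(t)) ≤ ∫₀^t ds/V(φ⁻¹(s)) ≤ C·t/V(φ⁻¹(t)). -/
/-!
Write `ψ = φ⁻¹` and `f s = 1 / V (ψ s)`. Since `f` is nonincreasing, `∫₀^t f ≥ t f(t)`.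
Conversely, for `0 < s ≤ t` the lower bound on `φ` gives `ψ t / ψ s ≲ (t / s) ^ (1 / d₃)`, so the
upper bound on `V` gives `f s ≲ (t / s) ^ a f(t)` with `a = d₂ / d₃ < 1`; as `s ↦ (t / s) ^ a` is
integrable on `(0, t]` with integral `t / (1 - a)`, this yields `∫₀^t f ≲ t f(t)`.
-/

open MeasureTheory Set

lemma le_mul_rpow_of_le_mul_rpow_of_mul_rpow_le {u x y c₂ c₃ d₂ d₃ : ℝ} (hx : 0 ≤ x)
    (hc₂ : 0 ≤ c₂) (hc₃ : 0 < c₃) (hd₂ : 0 ≤ d₂) (hd₃ : 0 < d₃)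
    (hu : u ≤ c₂ * x ^ d₂) (hy : c₃ * x ^ d₃ ≤ y) :
    u ≤ c₂ / c₃ ^ (d₂ / d₃) * y ^ (d₂ / d₃) := by
  have hxy : x ^ d₃ ≤ y / c₃ := by rw [le_div_iff₀ hc₃]; linarith
  have hy₀ : 0 ≤ y := (mul_nonneg hc₃.le (Real.rpow_nonneg hx d₃)).trans hy
  have hx_pow : x ^ d₂ = (x ^ d₃) ^ (d₂ / d₃) := by
    rw [← Real.rpow_mul hx, mul_div_cancel₀ _ hd₃.ne']
  calc u ≤ c₂ * (x ^ d₃) ^ (d₂ / d₃) := hx_pow ▸ hu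
    _ ≤ c₂ * (y / c₃) ^ (d₂ / d₃) := by gcongr
    _ = c₂ / c₃ ^ (d₂ / d₃) * y ^ (d₂ / d₃) := by
      rw [Real.div_rpow hy₀ hc₃.le]
      ring

lemma div_rpow_eqOn_Ioi {t : ℝ} (ht : 0 ≤ t) (a : ℝ) :
    EqOn (fun s => (t / s) ^ a) (fun s => t ^ a * s ^ (-a)) (Ioi 0) := fun s (hs : 0 < s) => by
  dsimp only
  rw [Real.div_rpow ht hs.le, Real.rpow_neg hs.le, div_eq_mul_inv]

lemma integrableOn_Ioc_div_rpow {t a : ℝ} (ht : 0 ≤ t) (ha : a < 1) :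
    IntegrableOn (fun s => (t / s) ^ a) (Ioc 0 t) := by
  have hg_int : IntegrableOn (fun s => t ^ a * s ^ (-a)) (Ioc 0 t) :=
    ((intervalIntegral.intervalIntegrable_rpow' (by linarith : (-1 : ℝ) < -a)).1).const_mul _
  exact hg_int.congr_fun ((div_rpow_eqOn_Ioi ht a).symm.mono Ioc_subset_Ioi_self) measurableSet_Ioc

lemma integral_Ioc_div_rpow {t a : ℝ} (ht : 0 ≤ t) (ha : a < 1) :
    ∫ s in Ioc 0 t, (t / s) ^ a = t / (1 - a) := by
  rw [setIntegral_congr_fun measurableSet_Ioc ((div_rpow_eqOn_Ioi ht a).mono Ioc_subset_Ioi_self),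
    integral_const_mul, ← intervalIntegral.integral_of_le ht,
    integral_rpow (Or.inl (by linarith)), Real.zero_rpow (by linarith : -a + 1 ≠ 0), sub_zero,
    neg_add_eq_sub, mul_div_assoc', ← Real.rpow_add' ht (by linarith), add_sub_cancel,
    Real.rpow_one]

lemma integrableOn_Ioc_of_le_mul_div_rpow {f : ℝ → ℝ} {t K a : ℝ} (ht : 0 ≤ t) (ha : a < 1)
    (hf : AEStronglyMeasurable f (volume.restrict (Ioc 0 t)))
    (hf₀ : ∀ s ∈ Ioc 0 t, 0 ≤ f s) (hfle : ∀ s ∈ Ioc 0 t, f s ≤ K * (t / s) ^ a) :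
    IntegrableOn f (Ioc 0 t) :=
  ((integrableOn_Ioc_div_rpow ht ha).const_mul K).mono' hf <|
    (ae_restrict_iff' measurableSet_Ioc).2 <| .of_forall fun s hs => by
      rw [Real.norm_of_nonneg (hf₀ s hs)]
      exact hfle s hs

lemma setIntegral_Ioc_le_of_le_mul_div_rpow {f : ℝ → ℝ} {t K a : ℝ} (ht : 0 ≤ t) (ha : a < 1)
    (hf : IntegrableOn f (Ioc 0 t)) (hfle : ∀ s ∈ Ioc 0 t, f s ≤ K * (t / s) ^ a) :
    ∫ s in Ioc 0 t, f s ≤ K * (t / (1 - a)) :=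
  calc ∫ s in Ioc 0 t, f s ≤ ∫ s in Ioc 0 t, K * (t / s) ^ a :=
        setIntegral_mono_on hf ((integrableOn_Ioc_div_rpow ht ha).const_mul K) measurableSet_Ioc
          hfle
    _ = K * (t / (1 - a)) := by rw [integral_const_mul, integral_Ioc_div_rpow ht ha]

lemma one_div_comp_le_mul_div_rpow {V φ ψ : ℝ → ℝ} {c₂ c₃ d₂ d₃ : ℝ}
    (hc₂ : 0 ≤ c₂) (hc₃ : 0 < c₃) (hd₂ : 0 ≤ d₂) (hd₃ : 0 < d₃)
    (hVpos : ∀ r > 0, 0 < V r) (hψ : ∀ t > 0, 0 < ψ t ∧ φ (ψ t) = t)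
    (hψmono : MonotoneOn ψ (Ioi 0))
    (hV : ∀ r R : ℝ, 0 < r → r ≤ R → V R / V r ≤ c₂ * (R / r) ^ d₂)
    (hφ : ∀ r R : ℝ, 0 < r → r ≤ R → c₃ * (R / r) ^ d₃ ≤ φ R / φ r)
    {s t : ℝ} (hs : 0 < s) (hst : s ≤ t) :
    1 / V (ψ s) ≤ c₂ / c₃ ^ (d₂ / d₃) / V (ψ t) * (t / s) ^ (d₂ / d₃) := by
  obtain ⟨hψs, hφψs⟩ := hψ s hs
  obtain ⟨hψt, hφψt⟩ := hψ t (hs.trans_le hst)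
  have hψst : ψ s ≤ ψ t := hψmono hs (hs.trans_le hst) hst
  have hVratio : V (ψ t) / V (ψ s) ≤ c₂ / c₃ ^ (d₂ / d₃) * (t / s) ^ (d₂ / d₃) :=
    le_mul_rpow_of_le_mul_rpow_of_mul_rpow_le (div_nonneg hψt.le hψs.le) hc₂ hc₃ hd₂ hd₃
      (hV _ _ hψs hψst) (by simpa only [hφψs, hφψt] using hφ _ _ hψs hψst)
  have hVψs := hVpos _ hψs
  rw [div_le_iff₀ hVψs] at hVratio
  rw [div_mul_eq_mul_div, div_le_div_iff₀ hVψs (hVpos _ hψt), one_mul]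
  exact hVratio

theorem integral_inv_V_comparable_general (V φ ψ : ℝ → ℝ)
    (c₁ c₂ c₃ c₄ d₁ d₂ d₃ d₄ : ℝ)
    (hc₂ : 0 < c₂) (hc₃ : 0 < c₃)
    (hd₁ : 0 < d₁) (hd₁₂ : d₁ ≤ d₂) (hd₃ : 0 < d₃)
    (hd : d₂ < d₃)
    (hVmono : StrictMonoOn V (Set.Ioi 0)) (hVpos : ∀ r > 0, 0 < V r)
    (hφmono : StrictMonoOn φ (Set.Ioi 0))
    (hψ : ∀ t > 0, 0 < ψ t ∧ φ (ψ t) = t)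
    (hV : ∀ r R : ℝ, 0 < r → r ≤ R →
      c₁ * (R / r) ^ d₁ ≤ V R / V r ∧ V R / V r ≤ c₂ * (R / r) ^ d₂)
    (hφ : ∀ r R : ℝ, 0 < r → r ≤ R →
      c₃ * (R / r) ^ d₃ ≤ φ R / φ r ∧ φ R / φ r ≤ c₄ * (R / r) ^ d₄) :
    ∃ C > 0, ∀ t > 0,
      t / V (ψ t) ≤ (∫ s in Set.Ioc (0 : ℝ) t, 1 / V (ψ s)) ∧
        (∫ s in Set.Ioc (0 : ℝ) t, 1 / V (ψ s)) ≤ C * (t / V (ψ t)) := by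
  have ha : d₂ / d₃ < 1 := (div_lt_one hd₃).2 hd
  have hψmono : MonotoneOn ψ (Ioi 0) :=
    Function.monotoneOn_of_rightInvOn_of_mapsTo hφmono.monotoneOn (fun t ht => (hψ t ht).2)
      (fun t ht => (hψ t ht).1)
  have hanti : AntitoneOn (fun s => 1 / V (ψ s)) (Ioi 0) := fun s hs u hu hsu =>
    one_div_le_one_div_of_le (hVpos _ (hψ s hs).1)
      (hVmono.monotoneOn (hψ s hs).1 (hψ u hu).1 (hψmono hs hu hsu))
  have hbound {s t : ℝ} (hs : 0 < s) (hst : s ≤ t) :=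
    one_div_comp_le_mul_div_rpow hc₂.le hc₃ (hd₁.le.trans hd₁₂) hd₃ hVpos hψ hψmono
      (fun r R hr hrR => (hV r R hr hrR).2) (fun r R hr hrR => (hφ r R hr hrR).1) hs hst
  refine ⟨c₂ / c₃ ^ (d₂ / d₃) / (1 - d₂ / d₃),
    div_pos (div_pos hc₂ (Real.rpow_pos_of_pos hc₃ _)) (sub_pos.2 ha), fun t ht => ?_⟩
  have hf_int : IntegrableOn (fun s => 1 / V (ψ s)) (Ioc 0 t) :=
    integrableOn_Ioc_of_le_mul_div_rpow ht.le ha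
      ((aemeasurable_restrict_of_antitoneOn measurableSet_Ioc
        (hanti.mono Ioc_subset_Ioi_self)).aestronglyMeasurable)
      (fun s hs => (one_div_pos.2 (hVpos _ (hψ s hs.1).1)).le) (fun s hs => hbound hs.1 hs.2)
  constructor
  · have := setIntegral_ge_of_const_le_real measurableSet_Ioc measure_Ioc_lt_top.ne
      (fun s hs => hanti hs.1 ht hs.2) hf_int
    rwa [Real.volume_real_Ioc_of_le ht.le, sub_zero, one_div_mul_eq_div] at this
  · calc ∫ s in Ioc 0 t, 1 / V (ψ s)
        ≤ c₂ / c₃ ^ (d₂ / d₃) / V (ψ t) * (t / (1 - d₂ / d₃)) :=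
          setIntegral_Ioc_le_of_le_mul_div_rpow ht.le ha hf_int fun s hs => hbound hs.1 hs.2
      _ = c₂ / c₃ ^ (d₂ / d₃) / (1 - d₂ / d₃) * (t / V (ψ t)) := by ring

/-- If `V, φ` are strictly increasing positive functions on `(0,∞)` with two-sided
polynomial ratio bounds (exponents `d₁ ≤ d₂` for `V`, `d₃ ≤ d₄` for `φ`) and `d₂ < d₃`,
with `ψ = φ⁻¹`, then `∫₀^t ds / V(φ⁻¹(s)) ≍ t / V(φ⁻¹(t))` uniformly in `t > 0`. -/
theorem integral_inv_V_comparable (V φ ψ : ℝ → ℝ)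
    (c₁ c₂ c₃ c₄ d₁ d₂ d₃ d₄ : ℝ)
    (hc₁ : 0 < c₁) (hc₂ : 0 < c₂) (hc₃ : 0 < c₃) (hc₄ : 0 < c₄)
    (hd₁ : 0 < d₁) (hd₁₂ : d₁ ≤ d₂) (hd₃ : 0 < d₃) (hd₃₄ : d₃ ≤ d₄)
    (hd : d₂ < d₃)
    (hVmono : StrictMonoOn V (Set.Ioi 0)) (hVpos : ∀ r > 0, 0 < V r)
    (hφmono : StrictMonoOn φ (Set.Ioi 0)) (hφpos : ∀ r > 0, 0 < φ r)
    (hψ : ∀ t > 0, 0 < ψ t ∧ φ (ψ t) = t)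
    (hV : ∀ r R : ℝ, 0 < r → r ≤ R →
      c₁ * (R / r) ^ d₁ ≤ V R / V r ∧ V R / V r ≤ c₂ * (R / r) ^ d₂)
    (hφ : ∀ r R : ℝ, 0 < r → r ≤ R →
      c₃ * (R / r) ^ d₃ ≤ φ R / φ r ∧ φ R / φ r ≤ c₄ * (R / r) ^ d₄) :
    ∃ C > 0, ∀ t > 0,
      t / V (ψ t) ≤ (∫ s in Set.Ioc (0 : ℝ) t, 1 / V (ψ s)) ∧
        (∫ s in Set.Ioc (0 : ℝ) t, 1 / V (ψ s)) ≤ C * (t / V (ψ t)) :=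
  integral_inv_V_comparable_general V φ ψ c₁ c₂ c₃ c₄ d₁ d₂ d₃ d₄ hc₂ hc₃ hd₁ hd₁₂ hd₃ hd hVmono
    hVpos hφmono hψ hV hφ
end

section
/- (Generalized Borel–Cantelli) Let A₁, A₂, … be events on a probability space with ∑ₙ P(Aₙ) = ∞, and suppose there exist constants C ≥ 1 and L such that P(A_k ∩ A_j) ≤ C·P(A_k)·P(A_j) for all distinct k, j > L. Then P(limsup Aₙ) ≥ 1/C. -/
open MeasureTheory Filter Topology ENNReal

/-! By Cauchy–Schwarz, the counting function `N = ∑_{k ∈ I} 1_{A_k}` of finitely many events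
satisfies `(E N)² ≤ E[N²] · P(⋃_{k ∈ I} A_k)` (Chung–Erdős), and for indices past `L`
quasi-independence gives `E[N²] ≤ E N + C (E N)²`. Taking `I = {n, …, n + m - 1}` with `n > L`
and letting `m → ∞`, so that `E N → ∞`, yields `P(⋃_{k ≥ n} A_k) ≥ 1/C`; these tails decrease to
`limsup Aₙ`. -/

theorem ENNReal.inv_le_of_sq_le_add_mul_sq {β : Type*} {l : Filter β} [l.NeBot]
    {S : β → ℝ≥0∞} {c p : ℝ≥0∞} (hS : Tendsto S l (𝓝 ∞)) (hS_ne_top : ∀ m, S m ≠ ∞)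
    (h : ∀ m, S m ^ 2 ≤ (S m + c * S m ^ 2) * p) : c⁻¹ ≤ p := by
  rcases eq_or_ne p ∞ with rfl | hp
  · exact le_top
  have hlower : ∀ᶠ m in l, 1 ≤ ((S m)⁻¹ + c) * p := by
    filter_upwards [hS.eventually_ne top_ne_zero] with m hm
    have hsq_ne_zero : S m ^ 2 ≠ 0 := pow_ne_zero 2 hm
    have hsq_ne_top : S m ^ 2 ≠ ∞ := pow_ne_top (hS_ne_top m)
    rw [← ENNReal.mul_le_mul_iff_right hsq_ne_zero hsq_ne_top, mul_one]
    convert h m using 1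
    rw [← mul_assoc, mul_add, sq, mul_assoc, ENNReal.mul_inv_cancel hm (hS_ne_top m), mul_one,
      mul_comm _ c]
  have hlim : Tendsto (fun m ↦ ((S m)⁻¹ + c) * p) l (𝓝 (c * p)) := by
    simpa using ENNReal.Tendsto.mul_const ((tendsto_inv_iff.2 hS).add_const c) (Or.inr hp)
  have hcp : 1 ≤ c * p := ge_of_tendsto hlim hlower
  exact (ENNReal.inv_le_iff_le_mul (fun hp_top ↦ absurd hp_top hp) fun hc hp0 ↦ by
    simp_all).2 hcp

theorem ENNReal.tsum_nat_add_eq_top {f : ℕ → ℝ≥0∞} (hf : ∑' i, f i = ∞)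
    (hf_ne_top : ∀ i, f i ≠ ∞) (n : ℕ) : ∑' i, f (i + n) = ∞ := by
  have hsplit := (ENNReal.summable.hasSum (f := fun i ↦ f (i + n))).sum_range_add.tsum_eq
  rw [hf] at hsplit
  by_contra htail
  exact ENNReal.add_ne_top.2 ⟨ENNReal.sum_ne_top.2 fun i _ ↦ hf_ne_top i, htail⟩ hsplit.symm

section
variable {α : Type*} [MeasurableSpace α] {μ : Measure α}

theorem sq_lintegral_le_lintegral_sq_mul_measure {f : α → ℝ≥0∞} (hf : AEMeasurable f μ)
    {s : Set α} (hs : MeasurableSet s) (hfs : Function.support f ⊆ s) :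
    (∫⁻ x, f x ∂μ) ^ 2 ≤ (∫⁻ x, f x ^ 2 ∂μ) * μ s := by
  have hf_eq : f * s.indicator 1 = f := by
    ext x
    by_cases hx : x ∈ s
    · simp [hx]
    · simp [hx, Function.notMem_support.mp (mt (@hfs x) hx)]
  have hindicator_sq : ∀ x, s.indicator (1 : α → ℝ≥0∞) x ^ 2 = s.indicator 1 x := fun x ↦ by
    by_cases hx : x ∈ s <;> simp [hx]
  have holder := ENNReal.lintegral_mul_le_Lp_mul_Lq μ Real.HolderConjugate.two_two hf
    (g := s.indicator 1) (aemeasurable_one.indicator hs)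
  simp only [hf_eq, rpow_two, hindicator_sq, lintegral_indicator_one hs] at holder
  rwa [← mul_rpow_of_nonneg _ _ (by norm_num), one_div, le_rpow_inv_iff (by norm_num),
    rpow_two] at holder

theorem sq_sum_measure_le_sum_measure_inter_mul_measure_biUnion {ι : Type*} (I : Finset ι)
    {s : ι → Set α} (hs : ∀ i, MeasurableSet (s i)) :
    (∑ i ∈ I, μ (s i)) ^ 2 ≤ (∑ i ∈ I, ∑ j ∈ I, μ (s i ∩ s j)) * μ (⋃ i ∈ I, s i) := by
  set f : α → ℝ≥0∞ := fun x ↦ ∑ i ∈ I, (s i).indicator 1 x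
  have hf : Measurable f := Finset.measurable_sum _ fun i _ ↦ measurable_one.indicator (hs i)
  have hf_support : Function.support f ⊆ ⋃ i ∈ I, s i := fun x hx ↦ by
    obtain ⟨i, hi, hx⟩ := Finset.exists_ne_zero_of_sum_ne_zero hx
    exact Set.mem_biUnion hi (Set.mem_of_indicator_ne_zero hx)
  have hf_sq (x : α) : f x ^ 2 = ∑ i ∈ I, ∑ j ∈ I, (s i ∩ s j).indicator 1 x := by
    simp only [f, sq, Finset.sum_mul_sum, Set.inter_indicator_one, Pi.mul_apply]
  have hlintegral_f : ∫⁻ x, f x ∂μ = ∑ i ∈ I, μ (s i) := by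
    rw [lintegral_finsetSum _ fun i _ ↦ measurable_one.indicator (hs i)]
    simp only [lintegral_indicator_one (hs _)]
  have hlintegral_f_sq : ∫⁻ x, f x ^ 2 ∂μ = ∑ i ∈ I, ∑ j ∈ I, μ (s i ∩ s j) := by
    have hinter (i j : ι) : MeasurableSet (s i ∩ s j) := (hs i).inter (hs j)
    rw [lintegral_congr hf_sq, lintegral_finsetSum _ fun i _ ↦
      Finset.measurable_sum _ fun j _ ↦ measurable_one.indicator (hinter i j)]
    refine Finset.sum_congr rfl fun i _ ↦ ?_
    rw [lintegral_finsetSum _ fun j _ ↦ measurable_one.indicator (hinter i j)]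
    simp only [lintegral_indicator_one (hinter i _)]
  rw [← hlintegral_f, ← hlintegral_f_sq]
  exact sq_lintegral_le_lintegral_sq_mul_measure hf.aemeasurable
    (Finset.measurableSet_biUnion I fun i _ ↦ hs i) hf_support

theorem sum_sum_measure_inter_le {ι : Type*} (I : Finset ι) {s : ι → Set α} {c : ℝ≥0∞}
    (h : ∀ i ∈ I, ∀ j ∈ I, i ≠ j → μ (s i ∩ s j) ≤ c * μ (s i) * μ (s j)) :
    ∑ i ∈ I, ∑ j ∈ I, μ (s i ∩ s j) ≤ ∑ i ∈ I, μ (s i) + c * (∑ i ∈ I, μ (s i)) ^ 2 := by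
  classical
  calc ∑ i ∈ I, ∑ j ∈ I, μ (s i ∩ s j)
      ≤ ∑ i ∈ I, ∑ j ∈ I, ((if i = j then μ (s i) else 0) + c * μ (s i) * μ (s j)) := by
        gcongr with i hi j hj
        by_cases hij : i = j
        · simp [hij]
        · simpa [hij] using h i hi j hj hij
    _ = ∑ i ∈ I, μ (s i) + c * (∑ i ∈ I, μ (s i)) ^ 2 := by
        rw [sq, Finset.sum_mul_sum, Finset.mul_sum]
        simp only [Finset.sum_add_distrib, Finset.sum_ite_eq, Finset.sum_ite_mem,
          Finset.inter_self, Finset.mul_sum, mul_assoc]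

theorem inv_le_measure_iUnion_of_measure_inter_le [IsFiniteMeasure μ] {s : ℕ → Set α}
    (hs : ∀ i, MeasurableSet (s i)) {c : ℝ≥0∞} (hsum : ∑' i, μ (s i) = ∞)
    (h : ∀ i j, i ≠ j → μ (s i ∩ s j) ≤ c * μ (s i) * μ (s j)) : c⁻¹ ≤ μ (⋃ i, s i) := by
  refine ENNReal.inv_le_of_sq_le_add_mul_sq (S := fun m ↦ ∑ i ∈ Finset.range m, μ (s i))
    (hsum ▸ ENNReal.tendsto_nat_tsum _) (fun m ↦ ENNReal.sum_ne_top.2 fun i _ ↦ measure_ne_top μ _)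
    fun m ↦ ?_
  calc (∑ i ∈ Finset.range m, μ (s i)) ^ 2
      ≤ (∑ i ∈ Finset.range m, ∑ j ∈ Finset.range m, μ (s i ∩ s j)) *
          μ (⋃ i ∈ Finset.range m, s i) :=
        sq_sum_measure_le_sum_measure_inter_mul_measure_biUnion _ hs
    _ ≤ _ := mul_le_mul' (sum_sum_measure_inter_le _ fun i _ j _ ↦ h i j)
        (measure_mono (Set.iUnion₂_subset_iUnion _ _))

theorem le_measure_limsup_atTop [IsFiniteMeasure μ] {s : ℕ → Set α}
    (hs : ∀ n, MeasurableSet (s n)) {r : ℝ≥0∞} (h : ∀ᶠ n in atTop, r ≤ μ (⋃ i ≥ n, s i)) :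
    r ≤ μ (limsup s atTop) := by
  have hanti : Antitone fun n ↦ ⋃ i ≥ n, s i :=
    fun m n hmn ↦ Set.biUnion_mono (fun _ hi ↦ le_trans hmn hi) fun _ _ ↦ subset_rfl
  rw [limsup_eq_iInf_iSup_of_nat]
  exact ge_of_tendsto (tendsto_measure_iInter_atTop (fun n ↦ by measurability) hanti
    ⟨0, measure_ne_top μ _⟩) h

end

theorem generalized_borel_cantelli_general {Ω : Type*} [MeasurableSpace Ω]
    (P : Measure Ω) [IsProbabilityMeasure P]
    (A : ℕ → Set Ω) (hA : ∀ n, MeasurableSet (A n))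
    (C : ℝ) (L : ℕ)
    (hsum : ∑' n, P (A n) = ⊤)
    (hpair : ∀ k j : ℕ, L < k → L < j → k ≠ j →
      P (A k ∩ A j) ≤ ENNReal.ofReal C * P (A k) * P (A j)) :
    ENNReal.ofReal (1 / C) ≤ P (Filter.limsup A Filter.atTop) := by
  refine le_measure_limsup_atTop hA (eventually_atTop.2 ⟨L + 1, fun n hn ↦ ?_⟩)
  rw [Set.iUnion_ge_eq_iUnion_nat_add]
  calc ENNReal.ofReal (1 / C) ≤ (ENNReal.ofReal C)⁻¹ := one_div C ▸ ofReal_inv_le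
    _ ≤ P (⋃ i, A (i + n)) :=
      inv_le_measure_iUnion_of_measure_inter_le (fun i ↦ hA _)
        (ENNReal.tsum_nat_add_eq_top hsum (fun i ↦ measure_ne_top P _) n)
        fun i j hij ↦ hpair _ _ (by omega) (by omega) (by omega)

/-- Generalized Borel–Cantelli lemma (Kochen–Stone/Spitzer): if `∑ P(Aₙ) = ∞` and
`P(A_k ∩ A_j) ≤ C P(A_k) P(A_j)` for all distinct `k, j > L`, then
`P(limsup Aₙ) ≥ 1/C`. -/
theorem generalized_borel_cantelli {Ω : Type*} [MeasurableSpace Ω]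
    (P : Measure Ω) [IsProbabilityMeasure P]
    (A : ℕ → Set Ω) (hA : ∀ n, MeasurableSet (A n))
    (C : ℝ) (L : ℕ) (hC : 1 ≤ C)
    (hsum : ∑' n, P (A n) = ⊤)
    (hpair : ∀ k j : ℕ, L < k → L < j → k ≠ j →
      P (A k ∩ A j) ≤ ENNReal.ofReal C * P (A k) * P (A j)) :
    ENNReal.ofReal (1 / C) ≤ P (Filter.limsup A Filter.atTop) :=
  generalized_borel_cantelli_general P A hA C L hsum hpair
end

section
/- Let X be a conservative Markov process whose exit times satisfy P^x(τ_{B(x,r)} ≤ c₁φ(r)) ≤ 1/2 for all x, r (some c₁ > 0), with μ(B(x,r)) ≤ c₂ V(r) and u_A(x,y) ≤ u_A(x,x) for the Green function of A = B(x,r). Then the on-diagonal Green function lower bound u_{B(x,r)}(x,x) ≥ (c₁/(2c₂))·φ(r)/V(r) holds for all x ∈ M and r > 0. -/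
/-! Started at `x`, the process stays in `B(x,r)` up to time `c₁ φ(r)` with probability at least
`1/2`, so `E^x τ ≥ c₁ φ(r) / 2` by Markov's inequality. By the occupation identity and diagonal
dominance, `E^x τ = ∫_{B(x,r)} u(x,y) dμ(y) ≤ μ(B(x,r)) u(x,x) ≤ c₂ V(r) u(x,x)`. -/

open MeasureTheory Filter Set Metric

/-- Exit time of the process `X` from the set `A`. -/
noncomputable def exitTime {Ω M : Type*} (X : ℝ → Ω → M) (A : Set M) (ω : Ω) : ℝ :=
  sInf {t : ℝ | 0 < t ∧ X t ω ∉ A}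

theorem half_mul_le_integral_of_measure_le_le_half {Ω : Type*} [MeasurableSpace Ω]
    {P : Measure Ω} [IsProbabilityMeasure P] {f : Ω → ℝ} {a : ℝ} (ha : 0 ≤ a)
    (hf : 0 ≤ᵐ[P] f) (hfi : Integrable f P) (hsmall : P {ω | f ω ≤ a} ≤ 1 / 2) :
    a / 2 ≤ ∫ ω, f ω ∂P := by
  have hsmall' : P.real {ω | f ω ≤ a} ≤ 1 / 2 := by
    rw [measureReal_def]
    exact ENNReal.toReal_le_of_le_ofReal (by norm_num) (by simpa using hsmall)
  have hcover : P.real univ ≤ P.real {ω | f ω ≤ a} + P.real {ω | a ≤ f ω} :=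
    (measureReal_mono fun ω _ ↦ le_total (f ω) a).trans (measureReal_union_le _ _)
  have hlarge : 1 / 2 ≤ P.real {ω | a ≤ f ω} := by
    rw [probReal_univ] at hcover
    linarith
  calc a / 2 = a * (1 / 2) := by ring
    _ ≤ a * P.real {ω | a ≤ f ω} := mul_le_mul_of_nonneg_left hlarge ha
    _ ≤ ∫ ω, f ω ∂P := mul_meas_ge_le_integral_of_nonneg hf hfi a

theorem setIntegral_le_mul_measureReal_of_nonneg_of_le {α : Type*} [MeasurableSpace α]
    {μ : Measure α} {s : Set α} {f : α → ℝ} {C : ℝ} (hs : μ s < ⊤)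
    (hf : ∀ y ∈ s, 0 ≤ f y) (hC : ∀ y ∈ s, f y ≤ C) :
    ∫ y in s, f y ∂μ ≤ C * μ.real s :=
  (le_abs_self _).trans <| norm_setIntegral_le_of_norm_le_const hs fun y hy ↦ by
    rw [Real.norm_of_nonneg (hf y hy)]
    exact hC y hy

/-- On-diagonal lower bound for the Green function of a ball: if the exit time
satisfies `P^x(τ_{B(x,r)} ≤ c₁ φ(r)) ≤ 1/2`, `μ(B(x,r)) ≤ c₂ V(r)`, the Green
function `G x r` of `B(x,r)` is nonnegative, diagonally dominant and satisfies the
occupation identity `E^x τ_{B(x,r)} = ∫_{B(x,r)} G x r x y dμ(y)`, then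
`G x r x x ≥ (c₁/(2c₂)) φ(r)/V(r)`. -/
theorem green_on_diagonal_lower {Ω M : Type*} [MeasurableSpace Ω]
    [MeasurableSpace M] [PseudoMetricSpace M]
    (X : ℝ → Ω → M) (P : M → Measure Ω) (hP : ∀ x, IsProbabilityMeasure (P x))
    (μ : Measure M) (G : M → ℝ → M → M → ℝ) (V φ : ℝ → ℝ) (c₁ c₂ : ℝ)
    (hc₁ : 0 < c₁) (hc₂ : 0 < c₂)
    (hVpos : ∀ r > 0, 0 < V r) (hφpos : ∀ r > 0, 0 < φ r)
    (hτnn : ∀ (x : M) (r : ℝ) (ω : Ω), 0 ≤ exitTime X (ball x r) ω)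
    (hτint : ∀ (x : M), ∀ r > 0, Integrable (exitTime X (ball x r)) (P x))
    (hexit : ∀ x : M, ∀ r > 0,
      P x {ω | exitTime X (ball x r) ω ≤ c₁ * φ r} ≤ 1 / 2)
    (hvol : ∀ x : M, ∀ r > 0, μ (ball x r) ≤ ENNReal.ofReal (c₂ * V r))
    (hGnn : ∀ (x : M) (r : ℝ) (y z : M), 0 ≤ G x r y z)
    (hdom : ∀ x : M, ∀ r > 0, ∀ y : M, G x r x y ≤ G x r x x)
    (hocc : ∀ x : M, ∀ r > 0,
      ∫ ω, exitTime X (ball x r) ω ∂P x = ∫ y in ball x r, G x r x y ∂μ) :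
    ∀ x : M, ∀ r > 0, c₁ / (2 * c₂) * φ r / V r ≤ G x r x x := by
  intro x r hr
  have hVr := hVpos r hr
  have hexpect : c₁ * φ r / 2 ≤ ∫ ω, exitTime X (ball x r) ω ∂P x :=
    haveI := hP x
    half_mul_le_integral_of_measure_le_le_half (mul_pos hc₁ (hφpos r hr)).le
      (Eventually.of_forall (hτnn x r)) (hτint x r hr) (hexit x r hr)
  have hgreen : ∫ y in ball x r, G x r x y ∂μ ≤ G x r x x * μ.real (ball x r) :=
    setIntegral_le_mul_measureReal_of_nonneg_of_le
      ((hvol x r hr).trans_lt ENNReal.ofReal_lt_top)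
      (fun y _ ↦ hGnn x r x y) (fun y _ ↦ hdom x r hr y)
  have hball : μ.real (ball x r) ≤ c₂ * V r :=
    ENNReal.toReal_le_of_le_ofReal (by positivity) (hvol x r hr)
  have hkey : c₁ * φ r / 2 ≤ G x r x x * (c₂ * V r) :=
    calc c₁ * φ r / 2 ≤ G x r x x * μ.real (ball x r) := hexpect.trans (hocc x r hr ▸ hgreen)
      _ ≤ G x r x x * (c₂ * V r) := mul_le_mul_of_nonneg_left hball (hGnn x r x x)
  rw [div_le_iff₀ hVr, div_mul_eq_mul_div, div_le_iff₀ (by positivity)]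
  linarith
end

section
/- Let (M,d,μ) be a connected metric measure space with diam M = ∞ satisfying the volume doubling condition μ(B(x,2r)) ≤ c₁μ(B(x,r)) for all x, r. Then for each x₀ ∈ M and R > 0 there exists a sequence {A_i}_{i≥0} of balls of radius R with x₀ ∈ A₀, A_i ∩ A_{i+1} ≠ ∅ for all i, A_i ∩ A_j = ∅ whenever |i−j| ≥ 2, and d(x₀, A_i) → ∞ as i → ∞. -/
/-!
Cover `M` by the `R`-balls centred at a maximal separated set `N`. Their intersection graph is
connected because `M` is, locally finite because a separated set meets every compact set in
finitely many points, and infinite because `M` is unbounded. Kőnig's lemma then gives a geodesic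
ray in this graph starting at a centre whose ball contains `x₀`: consecutive balls of the ray
meet, balls two or more steps apart are neither adjacent nor equal, hence disjoint, and the
centres are distinct points of `N`, so they leave every bounded set.
-/

open MeasureTheory Filter Set Metric

open scoped NNReal

namespace SimpleGraph

def intersectionGraph {ι α : Type*} (s : ι → Set α) : SimpleGraph ι where
  Adj i j := i ≠ j ∧ (s i ∩ s j).Nonempty
  symm := ⟨fun _ _ h ↦ ⟨h.1.symm, by rw [inter_comm]; exact h.2⟩⟩
  loopless := ⟨fun _ h ↦ h.1 rfl⟩

section intersectionGraph

variable {ι α : Type*} {s : ι → Set α}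

@[simp]
lemma intersectionGraph_adj {i j : ι} :
    (intersectionGraph s).Adj i j ↔ i ≠ j ∧ (s i ∩ s j).Nonempty := Iff.rfl

lemma intersectionGraph_reachable_of_mem {i j : ι} {x : α} (hi : x ∈ s i) (hj : x ∈ s j) :
    (intersectionGraph s).Reachable i j := by
  rcases eq_or_ne i j with rfl | hij
  · rfl
  · exact Adj.reachable (intersectionGraph_adj.2 ⟨hij, x, hi, hj⟩)

lemma disjoint_of_ne_of_not_intersectionGraph_adj {i j : ι} (hij : i ≠ j)
    (h : ¬ (intersectionGraph s).Adj i j) : Disjoint (s i) (s j) := by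
  by_contra hst
  exact h ⟨hij, not_disjoint_iff_nonempty_inter.1 hst⟩

lemma intersectionGraph_connected [TopologicalSpace α] [PreconnectedSpace α] [Nonempty ι]
    (hopen : ∀ i, IsOpen (s i)) (hne : ∀ i, (s i).Nonempty) (hcover : ∀ x, ∃ i, x ∈ s i) :
    (intersectionGraph s).Connected := by
  let P (x y : α) : Prop := ∀ i j, x ∈ s i → y ∈ s j → (intersectionGraph s).Reachable i j
  have hP : ∀ x y, P x y := by
    refine PreconnectedSpace.induction₂' P (fun x ↦ ?_) ⟨fun x y z hxy hyz i j hx hz ↦ ?_⟩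
    · obtain ⟨k, hk⟩ := hcover x
      filter_upwards [(hopen k).mem_nhds hk] with y hy
      exact ⟨fun i j hx hy' ↦ (intersectionGraph_reachable_of_mem hx hk).trans
          (intersectionGraph_reachable_of_mem hy hy'),
        fun i j hy' hx ↦ (intersectionGraph_reachable_of_mem hy' hy).trans
          (intersectionGraph_reachable_of_mem hk hx)⟩
    · obtain ⟨k, hk⟩ := hcover y
      exact (hxy i k hx hk).trans (hyz k j hk hz)
  refine ⟨fun i j ↦ ?_⟩
  obtain ⟨x, hx⟩ := hne i
  obtain ⟨y, hy⟩ := hne j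
  exact hP x y i j hx hy

end intersectionGraph

end SimpleGraph

namespace Metric

variable {X : Type*}

lemma IsSeparated.finite_of_subset_isCompact [PseudoEMetricSpace X] {ε : ℝ≥0} {C K : Set X}
    (hε : ε ≠ 0) (hC : IsSeparated ε C) (hCK : C ⊆ K) (hK : IsCompact K) : C.Finite := by
  obtain ⟨N, -, hN, hNK⟩ := exists_finite_isCover_of_isCompact (ε := ε / 2) (by simpa using hε) hK
  refine Set.finite_of_encard_le_coe (k := N.ncard) ?_
  calc C.encard ≤ packingNumber (2 * (ε / 2)) K := by
        rw [mul_div_cancel₀ _ two_ne_zero]; exact hC.encard_le_packingNumber hCK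
    _ ≤ externalCoveringNumber (ε / 2) K := packingNumber_two_mul_le_externalCoveringNumber _ _
    _ ≤ N.encard := hNK.externalCoveringNumber_le_encard
    _ = N.ncard := hN.cast_ncard_eq.symm

variable [PseudoMetricSpace X]

lemma exists_isSeparated_forall_mem_ball {ε : ℝ≥0} {R : ℝ} (hεR : (ε : ℝ) < R) :
    ∃ N : Set X, IsSeparated ε N ∧ ∀ x, ∃ p ∈ N, x ∈ ball p R := by
  obtain ⟨N, hN⟩ := zorn_subset {N : Set X | N ⊆ univ ∧ IsSeparated ε N} fun c hc hchain ↦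
    ⟨⋃₀ c, ⟨subset_univ _, (pairwise_sUnion hchain.directedOn).2 fun N hN ↦ (hc hN).2⟩,
      fun _ ↦ subset_sUnion_of_mem⟩
  refine ⟨N, hN.prop.2, fun x ↦ ?_⟩
  obtain ⟨p, hp, hxp⟩ := mem_iUnion₂.1 ((IsCover.of_maximal_isSeparated hN).subset_iUnion_closedBall
    (mem_univ x))
  exact ⟨p, hp, closedBall_subset_ball hεR hxp⟩

lemma IsSeparated.finite_setOf_dist_le [ProperSpace X] {ε : ℝ≥0} {N : Set X} (hε : ε ≠ 0)
    (hN : IsSeparated ε N) (x : X) (r : ℝ) : {p : N | dist (p : X) x ≤ r}.Finite :=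
  ((hN.subset inter_subset_left).finite_of_subset_isCompact hε inter_subset_right
    (isCompact_closedBall x r)).preimage Subtype.val_injective.injOn |>.subset
      fun p hp ↦ ⟨p.2, hp⟩

lemma IsSeparated.tendsto_dist_cofinite [ProperSpace X] {ε : ℝ≥0} {N : Set X} (hε : ε ≠ 0)
    (hN : IsSeparated ε N) (x : X) : Tendsto (fun p : N ↦ dist x p) cofinite atTop :=
  Filter.tendsto_atTop.2 fun r ↦ eventually_cofinite.2 <|
    (hN.finite_setOf_dist_le hε x r).subset fun p hp ↦ by
      rw [mem_ofPred_eq, dist_comm]; exact (not_le.1 hp).le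

lemma IsSeparated.intersectionGraph_ball_neighborSet_finite [ProperSpace X] {ε : ℝ≥0}
    {N : Set X} (hε : ε ≠ 0) (hN : IsSeparated ε N) (R : ℝ) (p : N) :
    ((SimpleGraph.intersectionGraph fun q : N ↦ ball (q : X) R).neighborSet p).Finite :=
  (hN.finite_setOf_dist_le hε p (R + R)).subset fun _ hq ↦
    (dist_lt_add_of_nonempty_ball_inter_ball hq.2).le.trans_eq' (dist_comm _ _)

lemma dist_sub_le_infDist_ball {r : ℝ} (hr : 0 < r) (x y : X) :
    dist x y - r ≤ infDist x (ball y r) :=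
  (le_infDist (nonempty_ball.2 hr)).2 fun z hz ↦ by
    linarith [dist_triangle x z y, mem_ball.1 hz]

lemma infinite_of_forall_mem_ball {N : Set X} {R : ℝ} (hN : ∀ x, ∃ p ∈ N, x ∈ ball p R)
    (hX : ¬ Bornology.IsBounded (univ : Set X)) : N.Infinite := fun hfin ↦
  hX <| (Bornology.isBounded_biUnion hfin |>.2 fun p _ ↦ isBounded_ball).subset fun x _ ↦ by
    obtain ⟨p, hp, hxp⟩ := hN x
    exact mem_biUnion hp hxp

end Metric

namespace SimpleGraph

variable {V : Type*} {G : SimpleGraph V}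

lemma Connected.exists_adj_dist_eq_add_one (hG : G.Connected) {u w : V} (h : u ≠ w) :
    ∃ u', G.Adj u u' ∧ G.dist u' w + 1 = G.dist u w := by
  obtain ⟨p, hp⟩ := hG.exists_walk_length_eq_dist u w
  cases p with
  | nil => exact absurd rfl h
  | @cons _ u' _ hadj q =>
    refine ⟨_, hadj, le_antisymm ?_ ?_⟩
    · simpa [← hp] using dist_le q
    · simpa [dist_eq_one_iff_adj.2 hadj, add_comm] using
        hG.dist_triangle (u := u) (v := u') (w := w)

def geodesicCone (G : SimpleGraph V) (v u : V) : Set V :=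
  {w | G.dist v u + G.dist u w = G.dist v w}

lemma Connected.exists_adj_infinite_geodesicCone (hG : G.Connected)
    (hfin : ∀ u, (G.neighborSet u).Finite) {v u : V} (hu : (G.geodesicCone v u).Infinite) :
    ∃ u', G.Adj u u' ∧ G.dist v u' = G.dist v u + 1 ∧ (G.geodesicCone v u').Infinite := by
  by_contra! hcon
  -- A vertex `w ≠ u` of the cone lies in the cone of the first step of a geodesic from `u` to `w`.
  have hsub : G.geodesicCone v u ⊆ insert u
      (⋃ u' ∈ {u' | G.Adj u u' ∧ G.dist v u' = G.dist v u + 1}, G.geodesicCone v u') := by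
    intro w hw
    rcases eq_or_ne u w with rfl | hne
    · exact mem_insert _ _
    obtain ⟨u', hadj, hu'w⟩ := hG.exists_adj_dist_eq_add_one hne
    have h1 : G.dist v u' ≤ G.dist v u + 1 := by
      simpa [dist_eq_one_iff_adj.2 hadj] using hG.dist_triangle (u := v) (v := u) (w := u')
    have h2 := hG.dist_triangle (u := v) (v := u') (w := w)
    simp only [geodesicCone, mem_ofPred_eq] at hw
    exact mem_insert_of_mem _ <| mem_biUnion (x := u') ⟨hadj, by omega⟩ (by
      simp only [geodesicCone, mem_ofPred_eq]; omega)
  exact hu <| ((((hfin u).subset fun _ h ↦ h.1).biUnion fun u' hu' ↦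
    hcon u' hu'.1 hu'.2).insert u).subset hsub

theorem Connected.exists_geodesic_ray [Infinite V] (hG : G.Connected)
    (hfin : ∀ u, (G.neighborSet u).Finite) (v : V) :
    ∃ f : ℕ → V, f 0 = v ∧ ∀ i, G.dist v (f i) = i ∧ G.Adj (f i) (f (i + 1)) := by
  let step (u : {u // (G.geodesicCone v u).Infinite}) :=
    hG.exists_adj_infinite_geodesicCone hfin u.2
  let f (n : ℕ) : {u // (G.geodesicCone v u).Infinite} :=
    Nat.rec ⟨v, by simpa [geodesicCone] using infinite_univ⟩
      (fun _ u ↦ ⟨_, (step u).choose_spec.2.2⟩) n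
  have hdist (i : ℕ) : G.dist v (f i).1 = i := by
    induction i with
    | zero => simp [f]
    | succ i ih => exact (step (f i)).choose_spec.2.1.trans (by rw [ih])
  exact ⟨fun i ↦ (f i).1, rfl, fun i ↦ ⟨hdist i, (step (f i)).choose_spec.1⟩⟩

lemma ne_and_not_adj_of_forall_dist_eq {v : V} {f : ℕ → V} (hf : ∀ i, G.dist v (f i) = i)
    {i j : ℕ} (hij : i + 2 ≤ j) : f i ≠ f j ∧ ¬ G.Adj (f i) (f j) := by
  refine ⟨fun h ↦ by have := hf i; rw [h, hf j] at this; omega, fun hadj ↦ ?_⟩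
  have := hadj.diff_dist_adj (u := v)
  rw [hf i, hf j] at this
  omega

end SimpleGraph

open SimpleGraph

theorem chain_of_balls_general {M : Type*} [MetricSpace M] [ConnectedSpace M]
    [ProperSpace M]
    (hdiam : ∀ K : ℝ, ∃ x y : M, K < dist x y)
    (x₀ : M) (R : ℝ) (hR : 0 < R) :
    ∃ z : ℕ → M,
      x₀ ∈ ball (z 0) R ∧
      (∀ i : ℕ, (ball (z i) R ∩ ball (z (i + 1)) R).Nonempty) ∧
      (∀ i j : ℕ, i + 2 ≤ j ∨ j + 2 ≤ i → Disjoint (ball (z i) R) (ball (z j) R)) ∧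
      Filter.Tendsto (fun i => Metric.infDist x₀ (ball (z i) R))
        Filter.atTop Filter.atTop := by
  obtain ⟨ε, hε, hεR⟩ : ∃ ε : ℝ≥0, ε ≠ 0 ∧ (ε : ℝ) < R :=
    ⟨(R / 2).toNNReal, (Real.toNNReal_pos.2 (half_pos hR)).ne',
      by rw [Real.coe_toNNReal _ (half_pos hR).le]; linarith⟩
  obtain ⟨N, hsep, hcover⟩ := exists_isSeparated_forall_mem_ball (X := M) hεR
  have hunbdd : ¬ Bornology.IsBounded (univ : Set M) := fun h ↦ by
    obtain ⟨C, hC⟩ := isBounded_iff.1 h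
    obtain ⟨x, y, hxy⟩ := hdiam C
    exact (hC (mem_univ x) (mem_univ y)).not_gt hxy
  obtain ⟨y₀, hy₀, hx₀⟩ := hcover x₀
  have : Nonempty N := ⟨⟨y₀, hy₀⟩⟩
  have : Infinite N := (infinite_of_forall_mem_ball hcover hunbdd).to_subtype
  let G := intersectionGraph fun p : N ↦ ball (p : M) R
  have hconn : G.Connected := intersectionGraph_connected (fun _ ↦ isOpen_ball)
    (fun _ ↦ nonempty_ball.2 hR) fun x ↦ by
      obtain ⟨p, hp, hxp⟩ := hcover x
      exact ⟨⟨p, hp⟩, hxp⟩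
  obtain ⟨f, hf0, hf⟩ :=
    hconn.exists_geodesic_ray (hsep.intersectionGraph_ball_neighborSet_finite hε R) ⟨y₀, hy₀⟩
  refine ⟨fun i ↦ f i, by simpa [hf0] using hx₀, fun i ↦ (hf i).2.2, ?_, ?_⟩
  · have key {i j : ℕ} (hij : i + 2 ≤ j) : Disjoint (ball (f i : M) R) (ball (f j : M) R) :=
      have h := ne_and_not_adj_of_forall_dist_eq (fun i ↦ (hf i).1) hij
      disjoint_of_ne_of_not_intersectionGraph_adj h.1 h.2
    rintro i j (hij | hij)
    exacts [key hij, (key hij).symm]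
  · have hinj : Function.Injective f := fun i j h ↦ by
      simpa [(hf i).1, (hf j).1] using congrArg (G.dist ⟨y₀, hy₀⟩) h
    have hdist : Tendsto (fun i ↦ dist x₀ (f i : M)) atTop atTop :=
      (hsep.tendsto_dist_cofinite hε x₀).comp (Nat.cofinite_eq_atTop ▸ hinj.tendsto_cofinite)
    exact tendsto_atTop_mono (fun i ↦ dist_sub_le_infDist_ball hR x₀ _)
      (tendsto_atTop_add_const_right _ (-R) hdist)

/-- Infinite chain of balls in a connected doubling metric measure space of
infinite diameter: for any `x₀` and `R > 0` there is a sequence of balls of radius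
`R`, starting at `x₀`, consecutively intersecting, disjoint at distance `≥ 2` in the
index, and escaping to infinity. -/
theorem chain_of_balls {M : Type*} [MetricSpace M] [ConnectedSpace M]
    [MeasurableSpace M] [ProperSpace M]
    (μ : Measure M) (c₁ : ℝ) (hc₁ : 0 < c₁)
    (hfull : ∀ (x : M), ∀ r > 0, 0 < μ (ball x r))
    (hfin : ∀ (x : M), ∀ r > 0, μ (ball x r) < ⊤)
    (hdoub : ∀ (x : M), ∀ r > 0, μ (ball x (2 * r)) ≤ ENNReal.ofReal c₁ * μ (ball x r))
    (hdiam : ∀ K : ℝ, ∃ x y : M, K < dist x y)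
    (x₀ : M) (R : ℝ) (hR : 0 < R) :
    ∃ z : ℕ → M,
      x₀ ∈ ball (z 0) R ∧
      (∀ i : ℕ, (ball (z i) R ∩ ball (z (i + 1)) R).Nonempty) ∧
      (∀ i j : ℕ, i + 2 ≤ j ∨ j + 2 ≤ i → Disjoint (ball (z i) R) (ball (z j) R)) ∧
      Filter.Tendsto (fun i => Metric.infDist x₀ (ball (z i) R))
        Filter.atTop Filter.atTop :=
  chain_of_balls_general hdiam x₀ R hR
end
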